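/- arXiv:1912.01093 — 6 statements merged into one kernel-verified Lean document; each statement's English description precedes it below -/
import Mathlib

section
/- For every finite simple graph G with no isolated vertex, the total Roman domination number of G is at most the total strong Roman domination number of G, which in turn is at most ⌈(Δ+1)/2⌉ times the total domination number of G, where Δ is the maximum degree of G. -/
open Finset

variable {V : Type*} [Fintype V]

/-- The degree of a vertex. -/
noncomputable def degN (G : SimpleGraph V) (v : V) : ℕ := {u | G.Adj v u}.ncard

/-- Maximum degree. -/
noncomputable def maxDeg (G : SimpleGraph V) : ℕ := Finset.univ.sup (degN G)

/-- Minimum degree. -/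
noncomputable def minDeg (G : SimpleGraph V) : ℕ := sInf {d | ∃ v, degN G v = d}

/-- No isolated vertex. -/
def NoIsolated (G : SimpleGraph V) : Prop := ∀ v, ∃ u, G.Adj v u

/-- Total strong Roman dominating function. `(Δ+1)/2 = ⌈Δ/2⌉` and
`(m+1)/2 = ⌈m/2⌉` in natural-number arithmetic. -/
def IsTSRDF (G : SimpleGraph V) (f : V → ℕ) : Prop :=
  (∀ v, f v ≤ (maxDeg G + 1) / 2 + 1) ∧
  (∀ v, f v = 0 → ∃ u, G.Adj v u ∧
      1 + ({w | G.Adj u w ∧ f w = 0}.ncard + 1) / 2 ≤ f u) ∧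
  (∀ v, 0 < f v → ∃ u, G.Adj v u ∧ 0 < f u)

/-- The total strong Roman domination number. -/
noncomputable def tsrd (G : SimpleGraph V) : ℕ :=
  sInf {k | ∃ f : V → ℕ, IsTSRDF G f ∧ ∑ v, f v = k}

/-- Total Roman dominating function. -/
def IsTRDF (G : SimpleGraph V) (f : V → ℕ) : Prop :=
  (∀ v, f v ≤ 2) ∧
  (∀ v, f v = 0 → ∃ u, G.Adj v u ∧ f u = 2) ∧
  (∀ v, 0 < f v → ∃ u, G.Adj v u ∧ 0 < f u)

/-- Total Roman domination number. -/
noncomputable def trd (G : SimpleGraph V) : ℕ :=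
  sInf {k | ∃ f : V → ℕ, IsTRDF G f ∧ ∑ v, f v = k}

/-- Total dominating set. -/
def IsTDS (G : SimpleGraph V) (S : Finset V) : Prop := ∀ v, ∃ u ∈ S, G.Adj v u

/-- Total domination number. -/
noncomputable def td (G : SimpleGraph V) : ℕ :=
  sInf {k | ∃ S : Finset V, IsTDS G S ∧ S.card = k}


/-! Proof idea. Capping a TStRD-function at 2 yields a TRD-function of no larger weight,
because a vertex of value 0 is dominated by a neighbour of value at least 2. Conversely,
give every vertex of a total dominating set `S` the value `⌈(Δ+1)/2⌉ = (Δ+2)/2`: a vertex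
`u ∈ S` has a neighbour in `S`, so it has at most `Δ - 1` neighbours of value 0, and
`1 + ⌈(Δ-1)/2⌉ = ⌈(Δ+1)/2⌉`. -/

theorem degN_le_maxDeg (G : SimpleGraph V) (v : V) : degN G v ≤ maxDeg G :=
  Finset.le_sup (Finset.mem_univ v)

theorem exists_isTDS_card_eq_td {W : Type*} {G : SimpleGraph W} {S : Finset W}
    (hS : IsTDS G S) :
    ∃ T, IsTDS G T ∧ T.card = td G := by
  have hne : {k | ∃ T : Finset W, IsTDS G T ∧ T.card = k}.Nonempty := ⟨_, S, hS, rfl⟩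
  exact Nat.sInf_mem hne

section

variable {G : SimpleGraph V}

theorem trd_le_sum {f : V → ℕ} (hf : IsTRDF G f) : trd G ≤ ∑ v, f v :=
  Nat.sInf_le ⟨f, hf, rfl⟩

theorem tsrd_le_sum {f : V → ℕ} (hf : IsTSRDF G f) : tsrd G ≤ ∑ v, f v :=
  Nat.sInf_le ⟨f, hf, rfl⟩

theorem IsTSRDF.isTRDF_min_two {f : V → ℕ} (hf : IsTSRDF G f) :
    IsTRDF G (fun v => min (f v) 2) := by
  obtain ⟨-, hzero, htotal⟩ := hf
  refine ⟨fun v => min_le_right _ _, fun v hv => ?_, fun v hv => ?_⟩ <;> dsimp only at hv ⊢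
  · have hfv : f v = 0 := by omega
    obtain ⟨u, hadj, hu⟩ := hzero v hfv
    have hpos : 0 < {w | G.Adj u w ∧ f w = 0}.ncard :=
      (Set.ncard_pos (Set.toFinite _)).2 ⟨v, hadj.symm, hfv⟩
    exact ⟨u, hadj, by omega⟩
  · obtain ⟨u, hadj, hu⟩ := htotal v (by omega)
    exact ⟨u, hadj, by omega⟩

theorem exists_isTSRDF_sum_eq_tsrd {f : V → ℕ} (hf : IsTSRDF G f) :
    ∃ g, IsTSRDF G g ∧ ∑ v, g v = tsrd G := by
  have hne : {k | ∃ g : V → ℕ, IsTSRDF G g ∧ ∑ v, g v = k}.Nonempty := ⟨_, f, hf, rfl⟩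
  exact Nat.sInf_mem hne

theorem trd_le_tsrd {f : V → ℕ} (hf : IsTSRDF G f) : trd G ≤ tsrd G := by
  obtain ⟨g, hg, hsum⟩ := exists_isTSRDF_sum_eq_tsrd hf
  calc trd G ≤ ∑ v, min (g v) 2 := trd_le_sum hg.isTRDF_min_two
    _ ≤ ∑ v, g v := Finset.sum_le_sum fun v _ => min_le_left _ _
    _ = tsrd G := hsum

theorem isTDS_univ (hni : NoIsolated G) : IsTDS G Finset.univ := fun v =>
  let ⟨u, hu⟩ := hni v
  ⟨u, Finset.mem_univ u, hu⟩

variable [DecidableEq V]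

theorem IsTDS.ncard_zero_neighbors_lt_maxDeg {S : Finset V} (hS : IsTDS G S) {c : ℕ}
    (hc : c ≠ 0) {u : V} :
    {w | G.Adj u w ∧ (if w ∈ S then c else 0) = 0}.ncard < maxDeg G := by
  obtain ⟨w₀, hw₀S, hw₀adj⟩ := hS u
  have hssub : {w | G.Adj u w ∧ (if w ∈ S then c else 0) = 0} ⊂ {w | G.Adj u w} :=
    ⟨fun w hw => hw.1, fun h => hc (by simpa [hw₀S] using (h hw₀adj).2)⟩
  exact (Set.ncard_lt_ncard hssub (Set.toFinite _)).trans_le (degN_le_maxDeg G u)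

theorem IsTDS.isTSRDF {S : Finset V} (hS : IsTDS G S) :
    IsTSRDF G (fun v => if v ∈ S then (maxDeg G + 2) / 2 else 0) := by
  have hc : (maxDeg G + 2) / 2 ≠ 0 := by omega
  refine ⟨fun v => ?_, fun v _ => ?_, fun v _ => ?_⟩ <;> dsimp only
  · split <;> omega
  · obtain ⟨u, huS, hadj⟩ := hS v
    have := hS.ncard_zero_neighbors_lt_maxDeg hc (u := u)
    exact ⟨u, hadj, by rw [if_pos huS]; omega⟩
  · obtain ⟨u, huS, hadj⟩ := hS v
    exact ⟨u, hadj, by rw [if_pos huS]; omega⟩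

theorem IsTDS.tsrd_le {S : Finset V} (hS : IsTDS G S) :
    tsrd G ≤ (maxDeg G + 2) / 2 * S.card :=
  calc tsrd G ≤ ∑ v, if v ∈ S then (maxDeg G + 2) / 2 else 0 := tsrd_le_sum hS.isTSRDF
    _ = (maxDeg G + 2) / 2 * S.card := by
      rw [Finset.sum_ite_mem, Finset.univ_inter, Finset.sum_const, smul_eq_mul, mul_comm]

end

theorem stmt0 (G : SimpleGraph V) (hni : NoIsolated G) :
    trd G ≤ tsrd G ∧ tsrd G ≤ (maxDeg G + 2) / 2 * td G := by
  classical
  obtain ⟨S, hS, hcard⟩ := exists_isTDS_card_eq_td (isTDS_univ hni)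
  exact ⟨trd_le_tsrd hS.isTSRDF, hcard ▸ hS.tsrd_le⟩
end

section
/- Let G be a connected graph of order n ≥ 2 with minimum degree δ. Then γ^t_StR(G) ≤ n − ⌊(δ−1)/2⌋. -/
open Finset

variable {V : Type*} [Fintype V]

theorem stmt5 (G : SimpleGraph V) (hc : G.Connected) (hn : 2 ≤ Fintype.card V) :
    tsrd G ≤ Fintype.card V - (minDeg G - 1) / 2 := by
  classical
  have hV : Nonempty V := Fintype.card_pos_iff.mp (by omega)
  set δ := minDeg G with hδ
  -- get a vertex of minimum degree
  have hmem : δ ∈ {d | ∃ v, degN G v = d} :=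
    Nat.sInf_mem ⟨degN G (Classical.arbitrary V), Classical.arbitrary V, rfl⟩
  obtain ⟨v, hv⟩ := hmem
  -- every vertex degree ≥ δ
  have hge : ∀ w, δ ≤ degN G w := fun w => Nat.sInf_le ⟨w, rfl⟩
  -- v has a neighbor, so δ ≥ 1
  obtain ⟨u₀, hu₀⟩ : ∃ u, G.Adj v u := by
    obtain ⟨u, hne⟩ := Fintype.exists_ne_of_one_lt_card (by omega) v
    obtain ⟨p⟩ := hc.preconnected v u
    cases p with
    | nil => exact absurd rfl hne.symm
    | cons h _ => exact ⟨_, h⟩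
  have hδ1 : 1 ≤ δ := by
    rw [← hv]
    exact (Set.ncard_pos (Set.toFinite _)).mpr ⟨u₀, hu₀⟩
  -- the neighbor finset of v
  set Nv : Finset V := Set.toFinset {u | G.Adj v u} with hNv
  have hNvcard : Nv.card = δ := by
    rw [hNv, ← Set.ncard_eq_toFinset_card']
    exact hv
  have hmemNv : ∀ x, x ∈ Nv ↔ G.Adj v x := by
    intro x; simp [hNv]
  -- δ ≤ n - 1
  have hδn : δ + 1 ≤ Fintype.card V := by
    have hsub : Nv ⊆ univ.erase v := by
      intro x hx
      exact Finset.mem_erase.mpr ⟨fun h => G.loopless.irrefl v (h ▸ (hmemNv x).mp hx), mem_univ x⟩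
    have := Finset.card_le_card hsub
    rw [hNvcard, Finset.card_erase_of_mem (mem_univ v), Finset.card_univ] at this
    omega
  -- choose S ⊆ Nv with card δ - 1
  obtain ⟨S, hSsub, hScard⟩ := Finset.exists_subset_card_eq (s := Nv) (n := δ - 1) (by omega)
  have hvS : v ∉ S := fun h => G.loopless.irrefl v ((hmemNv v).mp (hSsub h))
  -- the function
  set f : V → ℕ := fun w => if w ∈ S then 0 else if w = v then 1 + δ / 2 else 1 with hf
  have hfS : ∀ w, f w = 0 ↔ w ∈ S := by
    intro w
    simp only [hf]
    split_ifs with h1 h2 <;> simp [h1, *]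
  have hfpos : ∀ w, w ∉ S → 0 < f w := by
    intro w hw
    by_contra h
    exact hw ((hfS w).mp (by omega))
  have hfv : f v = 1 + δ / 2 := by simp [hf, hvS]
  -- δ ≤ maxDeg
  have hδΔ : δ ≤ maxDeg G := by
    rw [← hv]; exact Finset.le_sup (mem_univ v)
  have hTS : IsTSRDF G f := by
    refine ⟨?_, ?_, ?_⟩
    · intro w
      simp only [hf]
      split_ifs with h1 h2
      · omega
      · have : δ / 2 ≤ (maxDeg G + 1) / 2 := Nat.div_le_div_right (by omega)
        omega
      · omega
    · intro w hw
      refine ⟨v, ((hmemNv w).mp (hSsub ((hfS w).mp hw))).symm, ?_⟩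
      rw [hfv]
      have hsub : {x | G.Adj v x ∧ f x = 0} ⊆ (S : Set V) := by
        intro x hx
        exact (hfS x).mp hx.2
      have hle : {x | G.Adj v x ∧ f x = 0}.ncard ≤ δ - 1 := by
        have := Set.ncard_le_ncard hsub (Set.toFinite _)
        rwa [Set.ncard_coe_finset, hScard] at this
      have : ({x | G.Adj v x ∧ f x = 0}.ncard + 1) / 2 ≤ δ / 2 :=
        Nat.div_le_div_right (by omega)
      omega
    · intro w _
      by_contra hcon
      push_neg at hcon
      have hsub : {x | G.Adj w x} ⊆ (S : Set V) := by
        intro x hx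
        by_contra hxS
        exact absurd (hfpos x hxS) (by simpa using hcon x hx)
      have := Set.ncard_le_ncard hsub (Set.toFinite _)
      rw [Set.ncard_coe_finset, hScard] at this
      have := hge w
      rw [degN] at *
      omega
  -- the weight
  have hsum : ∑ x, f x = (1 + δ / 2) + (Fintype.card V - (δ - 1) - 1) := by
    have h1 : ∑ x, f x = ∑ x ∈ univ \ S, f x := by
      refine (Finset.sum_subset (Finset.sdiff_subset) ?_).symm
      intro x _ hx
      rw [hfS]
      simpa using hx
    have hvmem : v ∈ univ \ S := Finset.mem_sdiff.mpr ⟨mem_univ v, hvS⟩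
    rw [h1, ← Finset.add_sum_erase _ f hvmem, hfv]
    congr 1
    have h2 : ∀ x ∈ (univ \ S).erase v, f x = 1 := by
      intro x hx
      obtain ⟨hxv, hxS⟩ := Finset.mem_erase.mp hx
      simp [hf, (Finset.mem_sdiff.mp hxS).2, hxv]
    rw [Finset.sum_congr rfl h2, Finset.sum_const, smul_eq_mul, mul_one,
      Finset.card_erase_of_mem hvmem, Finset.card_sdiff_of_subset (Finset.subset_univ S),
      Finset.card_univ, hScard]
  have hle : tsrd G ≤ ∑ x, f x := Nat.sInf_le ⟨f, hTS, rfl⟩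
  rw [hsum] at hle
  omega
end

section
/- Let G be a connected graph of order n with girth g(G) ≥ 4 and minimum degree δ ≥ 3. Then γ^t_StR(G) ≤ n − ⌊g(G)/3⌋. -/
open Finset

variable {V : Type*} [Fintype V]

/-!
Take a shortest cycle `c₀ c₁ … c_{g-1}` and put `t = ⌊g/3⌋`. Label `c_{3j}` and `c_{3j+2}` with `0`
and `c_{3j+1}` with `2` for `j < t`, and every other vertex with `1`; the weight is `n - t`.
Because `g ≥ 4`, no vertex has three neighbours on a shortest cycle, so each `2` has at most two
zero neighbours, and since `δ ≥ 3` every vertex has a neighbour that is not labelled `0`.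
-/

theorem isTSRDF_of_le_two {G : SimpleGraph V} {f : V → ℕ} (hdeg : ∀ v, 3 ≤ degN G v)
    (hf : ∀ v, f v ≤ 2) (hzero : ∀ v, {x | G.Adj v x ∧ f x = 0}.ncard ≤ 2)
    (hdom : ∀ v, f v = 0 → ∃ u, G.Adj v u ∧ f u = 2) : IsTSRDF G f := by
  refine ⟨fun v => ?_, fun v hv => ?_, fun v _ => ?_⟩
  · have : degN G v ≤ maxDeg G := le_sup (mem_univ v)
    have := hdeg v
    have := hf v
    omega
  · obtain ⟨u, hvu, hu⟩ := hdom v hv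
    have := hzero u
    exact ⟨u, hvu, by omega⟩
  · by_contra! h
    have hsub : {x | G.Adj v x} ⊆ {x | G.Adj v x ∧ f x = 0} :=
      fun x hx => ⟨hx, Nat.le_zero.mp (h x hx)⟩
    have := (Set.ncard_le_ncard hsub).trans (hzero v)
    have := hdeg v
    unfold degN at *
    omega

def blockLabel (t i : ℕ) : ℕ := if 3 * t ≤ i then 1 else if i % 3 = 1 then 2 else 0

theorem sum_range_blockLabel (t n : ℕ) :
    ∑ i ∈ range n, blockLabel t i = if n ≤ 3 * t then 2 * ((n + 1) / 3) else n - t := by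
  induction n with
  | zero => simp
  | succ n ih =>
    rw [sum_range_succ, ih]
    unfold blockLabel
    split_ifs <;> omega

namespace SimpleGraph.Walk

variable {α : Type*} {G : SimpleGraph α} {a : α} {w : G.Walk a a}

theorem IsCycle.exists_getVert_eq (hw : w.IsCycle) {x : α} (hx : x ∈ w.support) :
    ∃ i < w.length, w.getVert i = x := by
  obtain ⟨n, rfl, hn⟩ := mem_support_iff_exists_getVert.mp hx
  rcases hn.lt_or_eq with hn | rfl
  · exact ⟨n, hn, rfl⟩
  · exact ⟨0, by have := hw.three_le_length; omega, by simp⟩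

theorem IsCycle.getVert_injective_fin (hw : w.IsCycle) :
    Function.Injective fun i : Fin w.length => w.getVert i :=
  fun i j h => Fin.ext <| hw.getVert_injOn' (by simp; omega) (by simp; omega) h

/-- The arc of `w` from position `i` to position `j`, closed up by `q`, is a cycle. -/
theorem IsCycle.girth_le_add_length (hw : w.IsCycle) {i j : ℕ} (hij : i < j)
    (hj : j < w.length) {q : G.Walk (w.getVert j) (w.getVert i)} (hq : q.IsPath)
    (hqw : ∀ x ∈ q.support.tail, x ∈ w.support → x = w.getVert i)
    (hlen : 1 < j - i ∨ 1 < q.length) :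
    G.girth ≤ j - i + q.length := by
  let p : G.Walk (w.getVert i) (w.getVert j) :=
    ((w.take j).drop i).copy (by simp [hij.le]) rfl
  have hp : p.IsPath := by simpa [p] using (hw.isPath_take hj).drop i
  have hplen : p.length = j - i := by simp [p]; omega
  have hpw : p.support ⊆ w.support := by
    simpa [p] using (isSubwalk_drop _ i).trans (isSubwalk_take w j) |>.support_subset
  have hdisj : p.support.tail.Disjoint q.support.tail := by
    intro x hxp hxq
    obtain rfl := hqw x hxq (hpw (List.mem_of_mem_tail hxp))
    have := hp.support_nodup
    rw [← cons_tail_support] at this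
    exact (List.nodup_cons.mp this).1 hxp
  simpa [hplen] using girth_le_length (hp.isCycle_append hq hdisj (by omega))

theorem IsCycle.eq_add_one_of_adj_getVert (hw : w.IsCycle) (hmin : w.length ≤ G.girth)
    {i j : ℕ} (hij : i < j) (hj : j < w.length) (h : G.Adj (w.getVert i) (w.getVert j)) :
    j = i + 1 ∨ (i = 0 ∧ j = w.length - 1) := by
  by_contra! hne
  have := hw.girth_le_add_length hij hj (q := h.symm.toWalk) (by simp [h.symm.ne])
    (by simp) (by omega)
  simp only [Adj.toWalk, length_cons, length_nil] at this
  omega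

theorem IsCycle.length_le_of_adj_getVert_of_adj_getVert (hw : w.IsCycle)
    (hmin : w.length ≤ G.girth) {v : α} (hv : v ∉ w.support) {i j : ℕ} (hij : i < j)
    (hj : j < w.length) (hvi : G.Adj v (w.getVert i)) (hvj : G.Adj v (w.getVert j)) :
    w.length ≤ j - i + 2 := by
  have hji : w.getVert j ≠ w.getVert i := fun h =>
    hij.ne' (hw.getVert_injOn' (by simp; omega) (by simp; omega) h)
  have hvw : ∀ k, w.getVert k ≠ v := fun k h => hv (h ▸ w.getVert_mem_support k)
  have := hw.girth_le_add_length hij hj (q := cons hvj.symm hvi.toWalk)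
    (by simp [hvi.ne, hji, hvw j]) (by simp [hv]) (by simp)
  simp only [Adj.toWalk, length_cons, length_nil] at this
  omega

/-- Three neighbours would give a chord of the cycle or, for a vertex off it, two arcs that add
up to less than the cycle but are each at least its length minus two. -/
theorem IsCycle.ncard_adj_mem_support_le_two (hw : w.IsCycle) (hmin : w.length ≤ G.girth)
    (h4 : 4 ≤ w.length) (v : α) : {x | G.Adj v x ∧ x ∈ w.support}.ncard ≤ 2 := by
  have hfin : {x | G.Adj v x ∧ x ∈ w.support}.Finite :=
    w.support.finite_toSet.subset fun x hx => hx.2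
  by_contra! h
  obtain ⟨_, ⟨hvx, hx⟩, _, ⟨hvy, hy⟩, _, ⟨hvz, hz⟩, hxy, hxz, hyz⟩ :=
    (Set.two_lt_ncard hfin).mp h
  obtain ⟨i, hi, rfl⟩ := hw.exists_getVert_eq hx
  obtain ⟨j, hj, rfl⟩ := hw.exists_getVert_eq hy
  obtain ⟨l, hl, rfl⟩ := hw.exists_getVert_eq hz
  replace hxy : i ≠ j := fun h => hxy (h ▸ rfl)
  replace hxz : i ≠ l := fun h => hxz (h ▸ rfl)
  replace hyz : j ≠ l := fun h => hyz (h ▸ rfl)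
  by_cases hv : v ∈ w.support
  · obtain ⟨k, hk, rfl⟩ := hw.exists_getVert_eq hv
    have near : ∀ m < w.length, G.Adj (w.getVert k) (w.getVert m) →
        m = k + 1 ∨ k = m + 1 ∨ (k = 0 ∧ m = w.length - 1) ∨ (m = 0 ∧ k = w.length - 1) := by
      intro m hm hadj
      rcases lt_trichotomy k m with hkm | rfl | hmk
      · have := hw.eq_add_one_of_adj_getVert hmin hkm hm hadj
        omega
      · exact absurd rfl hadj.ne
      · have := hw.eq_add_one_of_adj_getVert hmin hmk hk hadj.symm
        omega
    have := near i hi hvx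
    have := near j hj hvy
    have := near l hl hvz
    omega
  · have far : ∀ m < w.length, ∀ m' < w.length, m ≠ m' → G.Adj v (w.getVert m) →
        G.Adj v (w.getVert m') → w.length ≤ m - m' + (m' - m) + 2 := by
      intro m hm m' hm' hne hvm hvm'
      rcases hne.lt_or_gt with hlt | hlt
      · have := hw.length_le_of_adj_getVert_of_adj_getVert hmin hv hlt hm' hvm hvm'
        omega
      · have := hw.length_le_of_adj_getVert_of_adj_getVert hmin hv hlt hm hvm' hvm
        omega
    have := far i hi j hj hxy hvx hvy
    have := far i hi l hl hxz hvx hvz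
    have := far j hj l hl hyz hvy hvz
    omega

noncomputable def cycleLabelling (w : G.Walk a a) : α → ℕ :=
  Function.extend (fun i : Fin w.length => w.getVert i) (fun i => blockLabel (w.length / 3) i) 1

theorem IsCycle.cycleLabelling_getVert (hw : w.IsCycle) {i : ℕ} (hi : i < w.length) :
    w.cycleLabelling (w.getVert i) = blockLabel (w.length / 3) i :=
  hw.getVert_injective_fin.extend_apply _ _ ⟨i, hi⟩

theorem cycleLabelling_of_notMem {v : α} (hv : v ∉ w.support) : w.cycleLabelling v = 1 :=
  Function.extend_apply' _ _ _ fun ⟨i, hi⟩ => hv (hi ▸ w.getVert_mem_support i)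

theorem IsCycle.cycleLabelling_le_two (hw : w.IsCycle) (v : α) : w.cycleLabelling v ≤ 2 := by
  by_cases hv : v ∈ w.support
  · obtain ⟨i, hi, rfl⟩ := hw.exists_getVert_eq hv
    rw [hw.cycleLabelling_getVert hi]
    unfold blockLabel
    split_ifs <;> omega
  · simp [cycleLabelling_of_notMem hv]

theorem IsCycle.exists_getVert_eq_of_cycleLabelling_eq_zero (hw : w.IsCycle) {v : α}
    (hv : w.cycleLabelling v = 0) : ∃ i < 3 * (w.length / 3), i % 3 ≠ 1 ∧ w.getVert i = v := by
  by_cases hvw : v ∈ w.support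
  · obtain ⟨i, hi, rfl⟩ := hw.exists_getVert_eq hvw
    rw [hw.cycleLabelling_getVert hi] at hv
    unfold blockLabel at hv
    split_ifs at hv with h₁ h₂
    exact ⟨i, by omega, h₂, rfl⟩
  · simp [cycleLabelling_of_notMem hvw] at hv

theorem IsCycle.isTSRDF_cycleLabelling [Fintype α] (hw : w.IsCycle) (hmin : w.length ≤ G.girth)
    (h4 : 4 ≤ w.length) (hdeg : ∀ v, 3 ≤ degN G v) : IsTSRDF G w.cycleLabelling := by
  refine isTSRDF_of_le_two hdeg hw.cycleLabelling_le_two (fun v => ?_) (fun v hv => ?_)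
  · have hsub : {x | G.Adj v x ∧ w.cycleLabelling x = 0} ⊆ {x | G.Adj v x ∧ x ∈ w.support} := by
      rintro x ⟨hvx, hx⟩
      obtain ⟨i, -, -, rfl⟩ := hw.exists_getVert_eq_of_cycleLabelling_eq_zero hx
      exact ⟨hvx, w.getVert_mem_support i⟩
    exact (Set.ncard_le_ncard hsub).trans (hw.ncard_adj_mem_support_le_two hmin h4 v)
  · obtain ⟨i, hi, hi1, rfl⟩ := hw.exists_getVert_eq_of_cycleLabelling_eq_zero hv
    refine ⟨w.getVert (3 * (i / 3) + 1), ?_, ?_⟩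
    · rcases (show i % 3 = 0 ∨ i % 3 = 2 by omega) with h | h
      · simpa [show 3 * (i / 3) = i by omega] using w.adj_getVert_succ (i := i) (by omega)
      · simpa [show 3 * (i / 3) + 1 + 1 = i by omega] using
          (w.adj_getVert_succ (i := 3 * (i / 3) + 1) (by omega)).symm
    · rw [hw.cycleLabelling_getVert (by omega)]
      unfold blockLabel
      split_ifs <;> omega

theorem IsCycle.sum_cycleLabelling [Fintype α] (hw : w.IsCycle) :
    ∑ v, w.cycleLabelling v = Fintype.card α - w.length / 3 := by
  classical
  set e : Fin w.length → α := fun i => w.getVert i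
  have he : Function.Injective e := hw.getVert_injective_fin
  have hcycle : ∑ v ∈ univ.image e, w.cycleLabelling v = w.length - w.length / 3 := by
    rw [sum_image he.injOn]
    simp only [e, hw.cycleLabelling_getVert (Fin.is_lt _)]
    rw [Fin.sum_univ_eq_sum_range (blockLabel (w.length / 3)), sum_range_blockLabel]
    split_ifs <;> omega
  have hrest : ∑ v ∈ (univ.image e)ᶜ, w.cycleLabelling v = Fintype.card α - w.length := by
    have hone : ∀ v ∈ (univ.image e)ᶜ, w.cycleLabelling v = 1 := fun v hv =>
      Function.extend_apply' _ _ _ (by simpa [e] using hv)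
    rw [sum_congr rfl hone, sum_const, card_compl, card_image_of_injective _ he, card_univ,
      Fintype.card_fin, smul_eq_mul, mul_one]
  have hle : w.length ≤ Fintype.card α := by simpa using Fintype.card_le_of_injective e he
  rw [← sum_add_sum_compl (univ.image e), hcycle, hrest]
  omega

end SimpleGraph.Walk

theorem stmt8_general (G : SimpleGraph V) (hδ : 3 ≤ minDeg G)
    (hg : 4 ≤ G.girth) :
    tsrd G ≤ Fintype.card V - G.girth / 3 := by
  obtain ⟨a, w, hw, hgw⟩ := G.exists_girth_eq_length.mpr fun h => by
    simp [h.girth_eq_zero] at hg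
  have hdeg : ∀ v, 3 ≤ degN G v := fun v => hδ.trans (Nat.sInf_le ⟨v, rfl⟩)
  rw [hgw, ← hw.sum_cycleLabelling]
  exact Nat.sInf_le ⟨_, hw.isTSRDF_cycleLabelling hgw.ge (hgw ▸ hg) hdeg, rfl⟩

theorem stmt8 (G : SimpleGraph V) (hc : G.Connected) (hδ : 3 ≤ minDeg G)
    (hg : 4 ≤ G.girth) (hfin : G.egirth ≠ ⊤) :
    tsrd G ≤ Fintype.card V - G.girth / 3 :=
  stmt8_general G hδ hg
end

section
/- Let G be a connected graph of order n without isolated vertices. Then γ(G) + γ^t_StR(G) ≤ 3n/2. -/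
/-!
The constant labelling `1` is a total strong Roman dominating function as soon as there is no
isolated vertex, so `γ^t_StR(G) ≤ n`. By Ore's argument, the complement of a minimum dominating
set is again dominating, so `γ(G) ≤ n / 2`.
-/

open Finset

variable {V : Type*} [Fintype V]

/-- Dominating set. -/
def IsDS (G : SimpleGraph V) (S : Finset V) : Prop := ∀ v, ∃ u ∈ S, u = v ∨ G.Adj u v

/-- Domination number. -/
noncomputable def domNum (G : SimpleGraph V) : ℕ :=
  sInf {k | ∃ S : Finset V, IsDS G S ∧ S.card = k}

theorem exists_isDS_card_eq_domNum (G : SimpleGraph V) :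
    ∃ S : Finset V, IsDS G S ∧ S.card = domNum G :=
  Nat.sInf_mem (s := {k | ∃ S : Finset V, IsDS G S ∧ S.card = k})
    ⟨_, univ, fun v => ⟨v, mem_univ v, Or.inl rfl⟩, rfl⟩

section

variable {G : SimpleGraph V}

theorem isTSRDF_one (hni : NoIsolated G) : IsTSRDF G fun _ => 1 :=
  ⟨fun _ => Nat.le_add_left 1 _, fun _ h => absurd h one_ne_zero,
    fun v _ => (hni v).imp fun _ hu => ⟨hu, Nat.one_pos⟩⟩

theorem tsrd_le_card (hni : NoIsolated G) : tsrd G ≤ Fintype.card V :=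
  Nat.sInf_le ⟨_, isTSRDF_one hni, by simp⟩

/-- Ore: for `v ∈ D`, minimality gives a vertex dominated by `v` alone; if it is `v` itself, every
neighbour of `v` lies outside `D`, otherwise it is a neighbour of `v` outside `D`. -/
theorem IsDS.compl_of_minimal [DecidableEq V] (hni : NoIsolated G) {D : Finset V}
    (hD : IsDS G D) (hmin : ∀ v ∈ D, ¬ IsDS G (D.erase v)) : IsDS G Dᶜ := by
  intro v
  by_cases hvD : v ∈ D
  swap
  · exact ⟨v, mem_compl.mpr hvD, Or.inl rfl⟩
  obtain ⟨w, hw⟩ : ∃ w, ∀ u ∈ D.erase v, ¬(u = w ∨ G.Adj u w) := by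
    simpa [IsDS] using hmin v hvD
  by_cases hwv : w = v
  · subst hwv
    obtain ⟨u, hu⟩ := hni w
    refine ⟨u, mem_compl.mpr fun huD => hw u ?_ (Or.inr hu.symm), Or.inr hu.symm⟩
    exact mem_erase.mpr ⟨G.ne_of_adj hu.symm, huD⟩
  · have hwD : w ∉ D := fun h => hw w (mem_erase.mpr ⟨hwv, h⟩) (Or.inl rfl)
    obtain ⟨u, huD, hu⟩ := hD w
    obtain rfl : u = v := by
      by_contra huv
      exact hw u (mem_erase.mpr ⟨huv, huD⟩) hu
    have hadj : G.Adj u w := hu.resolve_left fun h => hwv h.symm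
    exact ⟨w, mem_compl.mpr hwD, Or.inr hadj.symm⟩

theorem two_mul_domNum_le_card (hni : NoIsolated G) : 2 * domNum G ≤ Fintype.card V := by
  classical
  obtain ⟨D, hD, hcard⟩ := exists_isDS_card_eq_domNum G
  have hle : ∀ S, IsDS G S → domNum G ≤ S.card := fun S hS => Nat.sInf_le ⟨S, hS, rfl⟩
  have hmin : ∀ v ∈ D, ¬ IsDS G (D.erase v) := fun v hv hE => by
    have := hle _ hE
    rw [card_erase_of_mem hv] at this
    have := card_pos.mpr ⟨v, hv⟩
    omega
  have hcompl := hle _ (hD.compl_of_minimal hni hmin)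
  rw [card_compl] at hcompl
  have := card_le_univ D
  omega

end

theorem stmt15_general (G : SimpleGraph V) (hni : NoIsolated G) :
    2 * (domNum G + tsrd G) ≤ 3 * Fintype.card V := by
  have := two_mul_domNum_le_card hni
  have := tsrd_le_card hni
  omega

theorem stmt15 (G : SimpleGraph V) (hc : G.Connected) (hni : NoIsolated G) :
    2 * (domNum G + tsrd G) ≤ 3 * Fintype.card V :=
  stmt15_general G hni
end

section
/- For any nontrivial tree T with maximum degree Δ(T), γ^t_StR(T) ≥ γ_t(T) + ⌈(Δ(T)−1)/2⌉. -/
open Finset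

variable {V : Type*} [Fintype V]

/-!
Let `f` be a total strong Roman dominating function and `u` a vertex of maximum degree `Δ`.
Start from the positive vertices of `f` together with `u`, and drop every neighbour `x` of `u`
with `f x = 1`, except that when `x` is the only positive neighbour of some `v ≠ u`, the vertex
`v` is dropped instead, or charged if `f v ≥ 2`. Since a tree has neither triangles nor 4-cycles,
what remains is a total dominating set (after adding back one neighbour of `u` if necessary),
the charged vertices are distinct and differ from the dominators of the zero neighbours of `u`.
A dominator `w` of `k` zero neighbours of `u` has surplus `f w - 1 ≥ ⌈k/2⌉`. So every positive
neighbour of `u` saves `1` and every zero neighbour `1/2`; after paying for `u` itself or for the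
added neighbour, rounding still leaves a saving of `⌊Δ/2⌋`.
-/

namespace SimpleGraph.IsAcyclic

variable {α : Type*} {G : SimpleGraph α}

theorem not_adj_of_adj_of_adj (hG : G.IsAcyclic) {a b c : α} (hab : G.Adj a b)
    (hbc : G.Adj b c) : ¬ G.Adj a c := fun hac => by
  classical
  exact hG.cliqueFree le_rfl {a, b, c} (is3Clique_triple_iff.mpr ⟨hab, hac, hbc⟩)

theorem eq_of_adj_of_adj (hG : G.IsAcyclic) {x y a b : α} (hxy : x ≠ y) (hxa : G.Adj x a)
    (hay : G.Adj a y) (hxb : G.Adj x b) (hby : G.Adj b y) : a = b := by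
  have hpa : (Walk.cons hxa (Walk.cons hay Walk.nil)).IsPath := by simp [hxa.ne, hay.ne, hxy]
  have hpb : (Walk.cons hxb (Walk.cons hby Walk.nil)).IsPath := by simp [hxb.ne, hby.ne, hxy]
  have := (hG.subsingleton_path x y).elim ⟨_, hpa⟩ ⟨_, hpb⟩
  simpa using congrArg (fun p : G.Path x y => p.1.support) this

end SimpleGraph.IsAcyclic

section Proxy

open scoped Classical

variable {α : Type*} {G : SimpleGraph α} {f : α → ℕ} {u x : α}

def IsSolePositiveNeighbor (G : SimpleGraph α) (f : α → ℕ) (x v : α) : Prop :=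
  G.Adj v x ∧ ∀ w, G.Adj v w → 0 < f w → w = x

/-- The vertex that pays for the neighbour `x` of `u`. Normally this is `x`, dropped from the
dominating set when `f x = 1`. But if `f x = 1` and `x` is the sole positive neighbour of some
`v ≠ u`, then `x` has to stay, and `v` is dropped instead (when `f v = 1`) or pays from its
surplus `f v - 1`. -/
noncomputable def proxy (G : SimpleGraph α) (f : α → ℕ) (u x : α) : α :=
  if h : f x = 1 ∧ ∃ v, v ≠ u ∧ IsSolePositiveNeighbor G f x v then h.2.choose else x

theorem proxy_of_not (h : ¬ (f x = 1 ∧ ∃ v, v ≠ u ∧ IsSolePositiveNeighbor G f x v)) :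
    proxy G f u x = x :=
  dif_neg h

theorem proxy_spec (h : f x = 1 ∧ ∃ v, v ≠ u ∧ IsSolePositiveNeighbor G f x v) :
    proxy G f u x ≠ u ∧ IsSolePositiveNeighbor G f x (proxy G f u x) := by
  rw [proxy, dif_pos h]
  exact h.2.choose_spec

theorem proxy_ne_self {v : α} (hx : f x = 1) (hvu : v ≠ u)
    (hv : IsSolePositiveNeighbor G f x v) : proxy G f u x ≠ x :=
  (proxy_spec ⟨hx, v, hvu, hv⟩).2.1.ne

theorem isSolePositiveNeighbor_proxy (hne : proxy G f u x ≠ x) :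
    IsSolePositiveNeighbor G f x (proxy G f u x) := by
  by_cases h : f x = 1 ∧ ∃ v, v ≠ u ∧ IsSolePositiveNeighbor G f x v
  · exact (proxy_spec h).2
  · exact absurd (proxy_of_not h) hne

theorem proxy_ne_center (hx : G.Adj u x) : proxy G f u x ≠ u := by
  by_cases h : f x = 1 ∧ ∃ v, v ≠ u ∧ IsSolePositiveNeighbor G f x v
  · exact (proxy_spec h).1
  · rw [proxy_of_not h]
    exact hx.ne'

theorem proxy_eq_self_of_adj (hG : G.IsAcyclic) (hx : G.Adj u x)
    (hp : G.Adj u (proxy G f u x)) : proxy G f u x = x := by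
  by_contra hne
  exact hG.not_adj_of_adj_of_adj hx (isSolePositiveNeighbor_proxy hne).1.symm hp

theorem not_adj_proxy (hG : G.IsAcyclic) {a : α} (ha : G.Adj u a) (hx : G.Adj u x)
    (hax : a ≠ x) : ¬ G.Adj a (proxy G f u x) := by
  intro hadj
  by_cases hne : proxy G f u x = x
  · rw [hne] at hadj
    exact hG.not_adj_of_adj_of_adj ha hadj hx
  · exact hax <| hG.eq_of_adj_of_adj (proxy_ne_center hx).symm ha hadj hx
      (isSolePositiveNeighbor_proxy hne).1.symm

theorem proxy_injOn (hG : G.IsAcyclic) : Set.InjOn (proxy G f u) {x | G.Adj u x} := by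
  intro x hx y hy hxy
  by_cases hpx : G.Adj u (proxy G f u x)
  · have hpy : G.Adj u (proxy G f u y) := hxy ▸ hpx
    rw [← proxy_eq_self_of_adj hG hx hpx, ← proxy_eq_self_of_adj hG hy hpy, hxy]
  · have hne : proxy G f u x ≠ x := fun h => hpx (by rwa [h])
    by_contra hxy'
    exact not_adj_proxy hG hx hy hxy' (hxy ▸ (isSolePositiveNeighbor_proxy hne).1.symm)

end Proxy

section Domination

open scoped Classical
open SimpleGraph

variable {G : SimpleGraph V} {f : V → ℕ} {u : V}

def ZerosStronglyDominated (G : SimpleGraph V) (f : V → ℕ) : Prop :=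
  ∀ v, f v = 0 → ∃ w, G.Adj v w ∧ 1 + ({x | G.Adj w x ∧ f x = 0}.ncard + 1) / 2 ≤ f w

theorem degN_eq_degree (G : SimpleGraph V) (v : V) : degN G v = G.degree v := by
  rw [degN, ← card_neighborFinset_eq_degree, ← Set.ncard_coe_finset, coe_neighborFinset]
  rfl

theorem sum_eq_card_add_sum_sub_one (f : V → ℕ) :
    ∑ v, f v = #({v | 0 < f v} : Finset V) + ∑ v with 0 < f v, (f v - 1) := by
  rw [← sum_filter_of_ne fun v _ h => Nat.pos_of_ne_zero h, card_eq_sum_ones, ← sum_add_distrib]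
  exact sum_congr rfl fun v hv => by have := (mem_filter.mp hv).2; omega

theorem two_le_of_dominates {v w : V} (hv : f v = 0) (hvw : G.Adj v w)
    (hw : 1 + ({x | G.Adj w x ∧ f x = 0}.ncard + 1) / 2 ≤ f w) : 2 ≤ f w := by
  have : 0 < {x | G.Adj w x ∧ f x = 0}.ncard :=
    (Set.ncard_pos (Set.toFinite _)).mpr ⟨v, hvw.symm, hv⟩
  omega

theorem card_le_two_mul_sum_image {A : Finset V} {dom : V → V}
    (hA : ∀ a ∈ A, f a = 0 ∧ G.Adj a (dom a) ∧
      1 + ({x | G.Adj (dom a) x ∧ f x = 0}.ncard + 1) / 2 ≤ f (dom a)) :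
    #A ≤ 2 * ∑ w ∈ A.image dom, (f w - 1) := by
  rw [card_eq_sum_card_image dom A, mul_sum]
  refine sum_le_sum fun w hw => ?_
  obtain ⟨a, ha, rfl⟩ := mem_image.mp hw
  have hfiber : #{b ∈ A | dom b = dom a} ≤ {x | G.Adj (dom a) x ∧ f x = 0}.ncard := by
    rw [← Set.ncard_coe_finset]
    refine Set.ncard_le_ncard fun b hb => ?_
    obtain ⟨hbA, hb⟩ := mem_filter.mp hb
    obtain ⟨hb0, hbadj, -⟩ := hA b hbA
    exact ⟨hb ▸ hbadj.symm, hb0⟩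
  have := (hA a ha).2.2
  omega

noncomputable def removedVertices (G : SimpleGraph V) (f : V → ℕ) (u : V) : Finset V :=
  {w ∈ {x ∈ G.neighborFinset u | 0 < f x}.image (proxy G f u) | f w = 1}

noncomputable def reducedSupport (G : SimpleGraph V) (f : V → ℕ) (u : V) : Finset V :=
  insert u ({v | 0 < f v} : Finset V) \ removedVertices G f u

theorem mem_reducedSupport_of_two_le {w : V} (hw : 2 ≤ f w) : w ∈ reducedSupport G f u := by
  simp only [reducedSupport, removedVertices, mem_sdiff, mem_insert, mem_filter, mem_univ,
    true_and]
  omega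

theorem center_mem_reducedSupport : u ∈ reducedSupport G f u := by
  simp only [reducedSupport, removedVertices, mem_sdiff, mem_insert_self, mem_filter, mem_image,
    mem_neighborFinset, true_and, not_and]
  rintro ⟨x, ⟨hx, -⟩, hxu⟩
  exact absurd hxu (proxy_ne_center hx)

theorem adj_center_of_mem_removedVertices {v w : V} (hw : w ∈ removedVertices G f u)
    (hvw : G.Adj v w) (hv : 0 < f v) (huv : ¬ G.Adj u v) :
    G.Adj u w ∧ f w = 1 ∧ proxy G f u w = w := by
  simp only [removedVertices, mem_filter, mem_image, mem_neighborFinset] at hw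
  obtain ⟨⟨x, ⟨hux, -⟩, rfl⟩, hx1⟩ := hw
  by_cases hne : proxy G f u x = x
  · rw [hne] at hx1 ⊢
    exact ⟨hux, hx1, hne⟩
  · exact absurd ((isSolePositiveNeighbor_proxy hne).2 v hvw.symm hv ▸ hux) huv

theorem exists_adj_mem_reducedSupport (hG : G.IsAcyclic)
    (hzero : ZerosStronglyDominated G f)
    (hpos : ∀ v, 0 < f v → ∃ w, G.Adj v w ∧ 0 < f w) {v : V} (hvu : v ≠ u) :
    ∃ w ∈ reducedSupport G f u, G.Adj v w := by
  rcases Nat.eq_zero_or_pos (f v) with hv0 | hv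
  · obtain ⟨w, hvw, hw⟩ := hzero v hv0
    exact ⟨w, mem_reducedSupport_of_two_le (two_le_of_dominates hv0 hvw hw), hvw⟩
  by_cases huv : G.Adj u v
  · exact ⟨u, center_mem_reducedSupport, huv.symm⟩
  by_contra! hnone
  have hremoved (w : V) (hvw : G.Adj v w) (hw : 0 < f w) :
      G.Adj u w ∧ f w = 1 ∧ proxy G f u w = w := by
    refine adj_center_of_mem_removedVertices ?_ hvw hv huv
    by_contra hw'
    exact hnone w (by simp [reducedSupport, hw, hw']) hvw
  obtain ⟨t, hvt, ht⟩ := hpos v hv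
  obtain ⟨hut, ht1, hpt⟩ := hremoved t hvt ht
  refine proxy_ne_self ht1 hvu ⟨hvt, fun w hvw hw => ?_⟩ hpt
  exact hG.eq_of_adj_of_adj hvu hvw (hremoved w hvw hw).1.symm hvt hut.symm

theorem proxy_pos (hzero : ZerosStronglyDominated G f) {x : V} (hx : 0 < f x) :
    0 < f (proxy G f u x) := by
  by_cases h : f x = 1 ∧ ∃ v, v ≠ u ∧ IsSolePositiveNeighbor G f x v
  · by_contra! h0
    obtain ⟨w, hpw, hw⟩ := hzero _ (Nat.le_zero.mp h0)
    have h2 := two_le_of_dominates (Nat.le_zero.mp h0) hpw hw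
    have hwx : w = x := (proxy_spec h).2.2 w hpw (by omega)
    rw [hwx] at h2
    omega
  · rwa [proxy_of_not h]

theorem card_reducedSupport_add_card_removedVertices :
    #(reducedSupport G f u) + #(removedVertices G f u) ≤
      #({v | 0 < f v} : Finset V) + if 0 < f u then 0 else 1 := by
  have hremoved : removedVertices G f u ⊆ insert u ({v | 0 < f v} : Finset V) := fun w hw => by
    simp only [removedVertices, mem_filter] at hw
    simp [hw.2]
  rw [reducedSupport, card_sdiff_add_card_eq_card hremoved]
  split_ifs with hu
  · rw [insert_eq_of_mem (by simpa using hu), add_zero]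
  · exact card_insert_le u _

theorem card_le_card_removedVertices_add_sum (hG : G.IsAcyclic)
    (hzero : ZerosStronglyDominated G f) :
    #{x ∈ G.neighborFinset u | 0 < f x} ≤ #(removedVertices G f u) +
      ∑ w ∈ {x ∈ G.neighborFinset u | 0 < f x}.image (proxy G f u), (f w - 1) := by
  have hinj : Set.InjOn (proxy G f u) ({x ∈ G.neighborFinset u | 0 < f x} : Finset V) :=
    (proxy_injOn hG).mono fun x hx => (mem_neighborFinset _ _ _).mp (mem_filter.mp hx).1
  rw [← card_image_of_injOn hinj, removedVertices, card_filter, card_eq_sum_ones,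
    ← sum_add_distrib]
  refine sum_le_sum fun w hw => ?_
  obtain ⟨x, hx, rfl⟩ := mem_image.mp hw
  have := proxy_pos (u := u) hzero (mem_filter.mp hx).2
  split_ifs <;> omega

theorem card_reducedSupport_add_le (hG : G.IsAcyclic)
    (hzero : ZerosStronglyDominated G f) :
    #(reducedSupport G f u) + #{x ∈ G.neighborFinset u | 0 < f x} +
      (#{x ∈ G.neighborFinset u | f x = 0} + 1) / 2 ≤
        ∑ v, f v + if 0 < f u then 0 else 1 := by
  rw [sum_eq_card_add_sum_sub_one f]
  have hsupport := card_reducedSupport_add_card_removedVertices (G := G) (f := f) (u := u)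
  have hY := card_le_card_removedVertices_add_sum (u := u) hG hzero
  have hproxy (x : V) (hx : 0 < f x) : 0 < f (proxy G f u x) := proxy_pos hzero hx
  choose! dom hdom using hzero
  set S : Finset V := {v | 0 < f v}
  set Y := {x ∈ G.neighborFinset u | 0 < f x}.image (proxy G f u)
  set Z := {x ∈ G.neighborFinset u | f x = 0}
  have hZ : #Z ≤ 2 * ∑ w ∈ Z.image dom, (f w - 1) :=
    card_le_two_mul_sum_image fun a ha => ⟨(mem_filter.mp ha).2, hdom a (mem_filter.mp ha).2⟩
  have hdisj : Disjoint Y (Z.image dom) := by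
    refine Finset.disjoint_left.mpr fun w hwY hwZ => ?_
    obtain ⟨x, hx, rfl⟩ := mem_image.mp hwY
    obtain ⟨a, ha, hax⟩ := mem_image.mp hwZ
    obtain ⟨hux, hx⟩ := mem_filter.mp hx
    obtain ⟨hua, ha⟩ := mem_filter.mp ha
    exact not_adj_proxy hG ((mem_neighborFinset _ _ _).mp hua) ((mem_neighborFinset _ _ _).mp hux)
      (by rintro rfl; omega) (hax ▸ (hdom a ha).1)
  have hsub : Y ∪ Z.image dom ⊆ S := by
    simp only [S, Y, Z, subset_iff, mem_union, mem_image, mem_filter, mem_univ, true_and]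
    rintro _ (⟨x, ⟨-, hx⟩, rfl⟩ | ⟨a, ⟨-, ha⟩, rfl⟩)
    · exact hproxy x hx
    · have := two_le_of_dominates ha (hdom a ha).1 (hdom a ha).2
      omega
  have hsurplus := sum_le_sum_of_subset (f := (f · - 1)) hsub
  rw [sum_union hdisj] at hsurplus
  omega

theorem exists_isTDS_card_add_degree_div_two_le (hG : G.IsAcyclic)
    (hzero : ZerosStronglyDominated G f)
    (hpos : ∀ v, 0 < f v → ∃ w, G.Adj v w ∧ 0 < f w) (u : V) :
    ∃ D : Finset V, IsTDS G D ∧ #D + G.degree u / 2 ≤ ∑ v, f v := by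
  have hweight := card_reducedSupport_add_le (u := u) hG hzero
  have hdeg : G.degree u =
      #{x ∈ G.neighborFinset u | 0 < f x} + #{x ∈ G.neighborFinset u | f x = 0} := by
    rw [← card_neighborFinset_eq_degree, ← card_filter_add_card_filter_not (fun x => 0 < f x)]
    simp only [not_lt, Nat.le_zero]
  have hposNbr {x : V} (hux : G.Adj u x) (hx : 0 < f x) :
      0 < #{x ∈ G.neighborFinset u | 0 < f x} :=
    card_pos.mpr ⟨x, by simp [hux, hx]⟩
  by_cases hu : ∃ w ∈ reducedSupport G f u, G.Adj u w
  · refine ⟨reducedSupport G f u, fun v => ?_, ?_⟩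
    · rcases eq_or_ne v u with rfl | hvu
      · exact hu
      · exact exists_adj_mem_reducedSupport hG hzero hpos hvu
    · split_ifs at hweight with hfu
      · omega
      · obtain ⟨w, huw, hw⟩ := hzero u (by omega)
        have := hposNbr huw (by have := two_le_of_dominates (by omega) huw hw; omega)
        omega
  · have hfu : 0 < f u := by
      by_contra! h0
      obtain ⟨w, huw, hw⟩ := hzero u (Nat.le_zero.mp h0)
      exact hu ⟨w, mem_reducedSupport_of_two_le (two_le_of_dominates (by omega) huw hw), huw⟩
    obtain ⟨x, hux, hx⟩ := hpos u hfu
    refine ⟨insert x (reducedSupport G f u), fun v => ?_, ?_⟩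
    · rcases eq_or_ne v u with rfl | hvu
      · exact ⟨x, mem_insert_self _ _, hux⟩
      · obtain ⟨w, hw, hvw⟩ := exists_adj_mem_reducedSupport hG hzero hpos hvu
        exact ⟨w, mem_insert_of_mem hw, hvw⟩
    · rw [if_pos hfu] at hweight
      have := card_insert_le x (reducedSupport G f u)
      have := hposNbr hux hx
      omega

end Domination

theorem isTSRDF_one_s17 {G : SimpleGraph V} (h : ∀ v, ∃ w, G.Adj v w) : IsTSRDF G fun _ => 1 :=
  ⟨fun _ => Nat.le_add_left 1 _, fun _ h1 => absurd h1 one_ne_zero,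
    fun v _ => (h v).imp fun _ hw => ⟨hw, one_pos⟩⟩

theorem stmt17 (G : SimpleGraph V) (ht : G.IsTree) (hn : 2 ≤ Fintype.card V) :
    td G + maxDeg G / 2 ≤ tsrd G := by
  have : Nontrivial V := Fintype.one_lt_card_iff_nontrivial.mp hn
  have hne : {k | ∃ f : V → ℕ, IsTSRDF G f ∧ ∑ v, f v = k}.Nonempty :=
    ⟨_, fun _ => 1, isTSRDF_one_s17 ht.connected.preconnected.exists_adj_of_nontrivial, rfl⟩
  obtain ⟨f, hf, hsum⟩ := Nat.sInf_mem hne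
  obtain ⟨u, -, hu⟩ := exists_mem_eq_sup univ univ_nonempty (degN G)
  obtain ⟨D, hD, hcard⟩ := exists_isTDS_card_add_degree_div_two_le ht.isAcyclic hf.2.1 hf.2.2 u
  have htd : td G ≤ #D := Nat.sInf_le ⟨D, hD, rfl⟩
  rw [tsrd, ← hsum, maxDeg, hu, degN_eq_degree]
  omega
end

section
/- For the star K_{1,n−1} with n ≥ 3, γ^t_StR(K_{1,n−1}) = ⌈(n−2)/2⌉ + 2, i.e., γ_t + ⌈(Δ−1)/2⌉ where γ_t = 2 and Δ = n−1. -/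
open Finset

variable {V : Type*} [Fintype V]

/-!
Write `m = n - 1` for the number of leaves. Labelling the center `⌊m/2⌋ + 1`, one leaf `1` and
the other leaves `0` is a total strong Roman dominating function of weight `⌊m/2⌋ + 2`.
Conversely, if `z ≥ 1` leaves are labelled `0`, they can only be dominated by the center, which
then carries at least `1 + ⌈z/2⌉`, and it needs a positive leaf, so `z < m` and the leaves carry
at least `m - z`. If no leaf is labelled `0`, the leaves carry at least `m`, and the center is
either positive or dominated by a leaf labelled at least `2`.
-/

theorem Finset.card_filter_ne_zero_add_sub_one_le_sum {ι : Type*} {s : Finset ι} {g : ι → ℕ}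
    {u : ι} (hu : u ∈ s) : #(s.filter (g · ≠ 0)) + (g u - 1) ≤ ∑ i ∈ s, g i := by
  have hsplit : ∑ i ∈ s, g i = ∑ i ∈ s, (if g i ≠ 0 then 1 else 0) + ∑ i ∈ s, (g i - 1) := by
    rw [← Finset.sum_add_distrib]
    refine Finset.sum_congr rfl fun i _ => ?_
    split_ifs <;> omega
  rw [hsplit, Finset.card_filter]
  gcongr
  exact Finset.single_le_sum (f := fun i => g i - 1) (fun _ _ => Nat.zero_le _) hu

section Star

variable {α β : Type*} [Fintype α]

theorem ncard_setOf_completeBipartiteGraph_adj_inl_and (j : β) (P : β ⊕ α → Prop)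
    [DecidablePred P] :
    {w | (completeBipartiteGraph β α).Adj (Sum.inl j) w ∧ P w}.ncard =
      #(univ.filter fun i => P (Sum.inr i)) := by
  have hset : {w | (completeBipartiteGraph β α).Adj (Sum.inl j) w ∧ P w} =
      Sum.inr '' ↑(univ.filter fun i => P (Sum.inr i)) := by
    ext (w | i) <;> simp
  rw [hset, Set.ncard_image_of_injective _ Sum.inr_injective, Set.ncard_coe_finset]

theorem card_le_maxDeg_star : Fintype.card α ≤ maxDeg (completeBipartiteGraph (Fin 1) α) := by
  have hcenter : degN (completeBipartiteGraph (Fin 1) α) (Sum.inl 0) = Fintype.card α := by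
    unfold degN
    simpa using ncard_setOf_completeBipartiteGraph_adj_inl_and (α := α) (0 : Fin 1) fun _ => True
  exact hcenter ▸ Finset.le_sup (f := degN _) (Finset.mem_univ _)

theorem exists_isTSRDF_star_sum_eq [Nonempty α] :
    ∃ f, IsTSRDF (completeBipartiteGraph (Fin 1) α) f ∧
      ∑ v, f v = Fintype.card α / 2 + 2 := by
  classical
  obtain ⟨i₀⟩ := ‹Nonempty α›
  set m := Fintype.card α
  have hm : 1 ≤ m := Fintype.card_pos
  let f : Fin 1 ⊕ α → ℕ := Sum.elim (fun _ => m / 2 + 1) fun i => if i = i₀ then 1 else 0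
  have hzeros : {w | (completeBipartiteGraph (Fin 1) α).Adj (Sum.inl 0) w ∧ f w = 0}.ncard =
      m - 1 := by
    rw [ncard_setOf_completeBipartiteGraph_adj_inl_and]
    simp [f, Finset.filter_ne', m]
  have hmax := card_le_maxDeg_star (α := α)
  refine ⟨f, ⟨?_, ?_, ?_⟩, ?_⟩
  · rintro (j | i)
    · simp only [f, Sum.elim_inl]
      omega
    · simp only [f, Sum.elim_inr]
      split_ifs <;> omega
  · rintro (j | i) hi
    · simp [f] at hi
    · refine ⟨Sum.inl 0, by simp, ?_⟩
      rw [hzeros]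
      simp only [f, Sum.elim_inl]
      omega
  · rintro (j | i) -
    · exact ⟨Sum.inr i₀, by simp, by simp [f]⟩
    · exact ⟨Sum.inl 0, by simp, by simp [f]⟩
  · simp [f, Fintype.sum_sum_type]

theorem le_sum_of_isTSRDF_star (hα : 2 ≤ Fintype.card α) {f : Fin 1 ⊕ α → ℕ}
    (hf : IsTSRDF (completeBipartiteGraph (Fin 1) α) f) :
    Fintype.card α / 2 + 2 ≤ ∑ v, f v := by
  classical
  obtain ⟨-, hzero, hpos⟩ := hf
  set m := Fintype.card α
  set z := #(univ.filter fun i => f (Sum.inr i) = 0) with hz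
  have hleaves : ∀ u, m - z + (f (Sum.inr u) - 1) ≤ ∑ i, f (Sum.inr i) := by
    intro u
    have hpart := Finset.card_filter_add_card_filter_not (s := univ)
      (p := fun i => f (Sum.inr i) = 0)
    have := Finset.card_filter_ne_zero_add_sub_one_le_sum
      (g := fun i => f (Sum.inr i)) (Finset.mem_univ u)
    simp only [ne_eq, Finset.card_univ] at hpart this
    rw [← hz] at hpart
    omega
  rw [Fintype.sum_sum_type, Fin.sum_univ_one]
  by_cases hz0 : z = 0
  · obtain ⟨i⟩ : Nonempty α := Fintype.card_pos_iff.mp (by omega)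
    by_cases hc : f (Sum.inl 0) = 0
    · obtain ⟨_ | i₁, hadj, hu⟩ := hzero _ hc
      · simp at hadj
      have hcz : 0 < {w | (completeBipartiteGraph (Fin 1) α).Adj (Sum.inr i₁) w ∧
          f w = 0}.ncard :=
        (Set.ncard_pos (Set.toFinite _)).mpr ⟨Sum.inl 0, by simp, hc⟩
      have := hleaves i₁
      omega
    · have := hleaves i
      omega
  · obtain ⟨i₁, hi₁⟩ := Finset.card_pos.mp (Nat.pos_of_ne_zero hz0)
    obtain ⟨j | _, hadj, hu⟩ := hzero (Sum.inr i₁) (Finset.mem_filter.mp hi₁).2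
    swap
    · simp at hadj
    rw [ncard_setOf_completeBipartiteGraph_adj_inl_and, Fin.fin_one_eq_zero j, ← hz] at hu
    obtain ⟨_ | i₂, hadj₂, hi₂⟩ := hpos (Sum.inl 0) (by omega)
    · simp at hadj₂
    have hzm : z < m := Finset.card_lt_card
      (Finset.filter_ssubset.mpr ⟨i₂, Finset.mem_univ _, hi₂.ne'⟩)
    have := hleaves i₂
    omega

theorem tsrd_star (hα : 2 ≤ Fintype.card α) :
    tsrd (completeBipartiteGraph (Fin 1) α) = Fintype.card α / 2 + 2 := by
  have : Nonempty α := Fintype.card_pos_iff.mp (by omega)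
  refine IsLeast.csInf_eq ⟨exists_isTSRDF_star_sum_eq, ?_⟩
  rintro k ⟨f, hf, rfl⟩
  exact le_sum_of_isTSRDF_star hα hf

end Star

theorem stmt19 (n : ℕ) (hn : 3 ≤ n) :
    tsrd (completeBipartiteGraph (Fin 1) (Fin (n - 1))) =
      (n - 2 + 1) / 2 + 2 := by
  rw [tsrd_star (by rw [Fintype.card_fin]; omega), Fintype.card_fin]
  congr 2
  omega
end
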